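/- Let G and G' be vertex-disjoint connection graphs (vertices are tagged transitions a^in, a^out) such that the place sets Π_G and Π_{G'} generated by their maximal cliques are separated pure distributed places. Then the places generated by the join G −− G' equal the cross-product: Π_{G −− G'} = Π_G ⊗ Π_{G'}, and this is a pure distributed place. -/

import Mathlib

open Set

structure Net (P T : Type) where
  pre : T → Set P
  post : T → Set P
  minit : Set P

variable {P T : Type}

def fireable (N : Net P T) (t : T) (M : Set P) : Prop := N.pre t ⊆ M

def fire (N : Net P T) (t : T) (M : Set P) : Set P := (M \ N.pre t) ∪ N.post t

def valid (N : Net P T) : Set P → List T → Prop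
  | _, [] => True
  | M, t :: σ => fireable N t M ∧ valid N (fire N t M) σ

def runFrom (N : Net P T) (M : Set P) (σ : List T) : Set P :=
  σ.foldl (fun M t => fire N t M) M

def isFiringSeq (N : Net P T) (σ : List T) : Prop := valid N N.minit σ

def reachable (N : Net P T) (M : Set P) : Prop :=
  ∃ σ, isFiringSeq N σ ∧ runFrom N N.minit σ = M

def safe (N : Net P T) : Prop :=
  ∀ M, reachable N M → ∀ t, fireable N t M → (N.post t \ N.pre t) ∩ M = ∅

/-- transitions inserting tokens into some place of `Q` (the set `•Q`). -/
def preQ (N : Net P T) (Q : Set P) : Set T := {t | (N.post t ∩ Q).Nonempty}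

/-- transitions removing tokens from some place of `Q` (the set `Q•`). -/
def postQ (N : Net P T) (Q : Set P) : Set T := {t | (N.pre t ∩ Q).Nonempty}

def adjQ (N : Net P T) (Q : Set P) : Set T := preQ N Q ∪ postQ N Q

def insQ (N : Net P T) (Q : Set P) : Set T := preQ N Q \ postQ N Q

def remQ (N : Net P T) (Q : Set P) : Set T := postQ N Q \ preQ N Q

def readQ (N : Net P T) (Q : Set P) : Set T :=
  {t ∈ adjQ N Q | N.pre t ∩ Q = N.post t ∩ Q}

def enablesQ (N : Net P T) (Q : Set P) : Set (T × T) :=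
  {tu | (Q ∩ (N.post tu.1 \ N.pre tu.1) ∩ N.pre tu.2).Nonempty}

def disablesQ (N : Net P T) (Q : Set P) : Set (T × T) :=
  {tu | (Q ∩ (N.pre tu.1 \ N.post tu.1) ∩ N.pre tu.2).Nonempty}

def postList (N : Net P T) (l : List T) : Set P := ⋃ t ∈ l, N.post t

def epreList (N : Net P T) (l : List T) : Set P := ⋃ t ∈ l, (N.pre t \ N.post t)

def isInSeq (N : Net P T) (Q : Set P) (σ : List T) : Prop :=
  σ ≠ [] ∧ (∀ t ∈ σ, t ∈ insQ N Q ∪ readQ N Q) ∧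
  (∀ t ∈ σ.head?, t ∈ insQ N Q) ∧
  ∀ i (h : i < σ.length), 0 < i →
    Q ∩ N.pre (σ.get ⟨i, h⟩) ⊆ postList N (σ.take i) ∧
    Q ∩ (N.post (σ.get ⟨i, h⟩) \ N.pre (σ.get ⟨i, h⟩)) ∩ postList N (σ.take i) = ∅

def isCInSeq (N : Net P T) (Q : Set P) (σ : List T) : Prop :=
  isInSeq N Q σ ∧ Q ⊆ postList N σ

def isOutSeq (N : Net P T) (Q : Set P) (σ : List T) : Prop :=
  σ ≠ [] ∧ (∀ t ∈ σ, t ∈ remQ N Q ∪ readQ N Q) ∧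
  (∀ t ∈ σ.head?, t ∈ remQ N Q) ∧
  ∀ i (h : i < σ.length), 0 < i →
    Q ∩ N.pre (σ.get ⟨i, h⟩) ⊆ Q \ epreList N (σ.take i)

def isCOutSeq (N : Net P T) (Q : Set P) (σ : List T) : Prop :=
  isOutSeq N Q σ ∧ Q ⊆ epreList N σ

def distPlace (N : Net P T) (Q : Set P) : Prop :=
  Q.Nonempty ∧
  adjQ N Q = insQ N Q ∪ remQ N Q ∪ readQ N Q ∧
  (∀ t ∈ insQ N Q, ∀ u ∈ remQ N Q, (t, u) ∈ enablesQ N Q) ∧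
  (∀ σ, isInSeq N Q σ → ∃ τ, σ <+: τ ∧ isCInSeq N Q τ) ∧
  (∀ σ, isOutSeq N Q σ → ∃ τ, σ <+: τ ∧ isCOutSeq N Q τ)

def pureDP (N : Net P T) (Q : Set P) : Prop := postQ N Q ∩ preQ N Q = ∅

def separated (N : Net P T) (Q R : Set P) : Prop := adjQ N Q ∩ adjQ N R = ∅

/-- tagged transitions `t^in` / `t^out` identifying places -/
inductive Tag (T : Type) where
  | inp : T → Tag T
  | out : T → Tag T

/-- the net whose places are identified with their sets of tagged adjacent
transitions: `(t, π_Z) ∈ Fl` iff `t^in ∈ Z` and `(π_Z, t) ∈ Fl` iff `t^out ∈ Z`. -/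
def tagNet (T : Type) : Net (Set (Tag T)) T where
  pre t := {Z | Tag.out t ∈ Z}
  post t := {Z | Tag.inp t ∈ Z}
  minit := ∅

/-- cross-product of sets of tagged places -/
def cross {T : Type} (Q R : Set (Set (Tag T))) : Set (Set (Tag T)) :=
  {W | ∃ Z ∈ Q, ∃ Z' ∈ R, W = Z ∪ Z'}

/-- a connection graph: an undirected graph on a set of tagged transitions -/
structure CGraph (T : Type) where
  verts : Set (Tag T)
  graph : SimpleGraph (Tag T)
  support : ∀ x y, graph.Adj x y → x ∈ verts ∧ y ∈ verts

/-- maximal cliques of a connection graph (within its vertex set) -/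
def cgMaxClique {T : Type} (Γ : CGraph T) (C : Set (Tag T)) : Prop :=
  C.Nonempty ∧ C ⊆ Γ.verts ∧ Γ.graph.IsClique C ∧
    ∀ D, D ⊆ Γ.verts → Γ.graph.IsClique D → C ⊆ D → D = C

/-- the places generated by a connection graph: `Π_Γ = {π_C | C a max-clique of Γ}` -/
def cgPlaces {T : Type} (Γ : CGraph T) : Set (Set (Tag T)) :=
  {C | cgMaxClique Γ C}

/-- disjoint union of connection graphs -/
def cgUnion {T : Type} (Γ Γ' : CGraph T) : CGraph T where
  verts := Γ.verts ∪ Γ'.verts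
  graph :=
    { Adj := fun x y => Γ.graph.Adj x y ∨ Γ'.graph.Adj x y
      symm := ⟨fun _ _ h => h.elim (fun h => Or.inl h.symm) (fun h => Or.inr h.symm)⟩
      loopless := ⟨fun x h => h.elim (Γ.graph.loopless.irrefl x) (Γ'.graph.loopless.irrefl x)⟩ }
  support := fun x y h => h.elim
    (fun h => ⟨Or.inl (Γ.support x y h).1, Or.inl (Γ.support x y h).2⟩)
    (fun h => ⟨Or.inr (Γ'.support x y h).1, Or.inr (Γ'.support x y h).2⟩)

/-- join of connection graphs: disjoint union plus all edges between vertex sets -/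
def cgJoin {T : Type} (Γ Γ' : CGraph T) : CGraph T where
  verts := Γ.verts ∪ Γ'.verts
  graph :=
    { Adj := fun x y => Γ.graph.Adj x y ∨ Γ'.graph.Adj x y ∨
        (x ≠ y ∧ ((x ∈ Γ.verts ∧ y ∈ Γ'.verts) ∨ (x ∈ Γ'.verts ∧ y ∈ Γ.verts)))
      symm := by
        refine ⟨?_⟩
        rintro x y (h | h | ⟨hne, h⟩)
        · exact Or.inl h.symm
        · exact Or.inr (Or.inl h.symm)
        · exact Or.inr (Or.inr ⟨hne.symm,
            h.elim (fun hh => Or.inr ⟨hh.2, hh.1⟩) (fun hh => Or.inl ⟨hh.2, hh.1⟩)⟩)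
      loopless := by
        refine ⟨?_⟩
        rintro x (h | h | ⟨hne, _⟩)
        · exact Γ.graph.loopless.irrefl x h
        · exact Γ'.graph.loopless.irrefl x h
        · exact hne rfl }
  support := by
    rintro x y (h | h | ⟨_, h | h⟩)
    · exact ⟨Or.inl (Γ.support x y h).1, Or.inl (Γ.support x y h).2⟩
    · exact ⟨Or.inr (Γ'.support x y h).1, Or.inr (Γ'.support x y h).2⟩
    · exact ⟨Or.inl h.1, Or.inr h.2⟩
    · exact ⟨Or.inr h.1, Or.inl h.2⟩

section Aux
variable {T : Type}

lemma mem_pre_tag {t : T} {P : Set (Tag T)} : P ∈ (tagNet T).pre t ↔ Tag.out t ∈ P := Iff.rfl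
lemma mem_post_tag {t : T} {P : Set (Tag T)} : P ∈ (tagNet T).post t ↔ Tag.inp t ∈ P := Iff.rfl

lemma mem_preQ_tag {Q : Set (Set (Tag T))} {t : T} :
    t ∈ preQ (tagNet T) Q ↔ ∃ Z ∈ Q, Tag.inp t ∈ Z := by
  constructor
  · rintro ⟨Z, hZ1, hZ2⟩; exact ⟨Z, hZ2, hZ1⟩
  · rintro ⟨Z, hZ1, hZ2⟩; exact ⟨Z, hZ2, hZ1⟩

lemma mem_postQ_tag {Q : Set (Set (Tag T))} {t : T} :
    t ∈ postQ (tagNet T) Q ↔ ∃ Z ∈ Q, Tag.out t ∈ Z := by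
  constructor
  · rintro ⟨Z, hZ1, hZ2⟩; exact ⟨Z, hZ2, hZ1⟩
  · rintro ⟨Z, hZ1, hZ2⟩; exact ⟨Z, hZ2, hZ1⟩

lemma adj_of_pre {Q : Set (Set (Tag T))} {t : T} (h : t ∈ preQ (tagNet T) Q) :
    t ∈ adjQ (tagNet T) Q := Set.mem_union_left _ h

lemma adj_of_post {Q : Set (Set (Tag T))} {t : T} (h : t ∈ postQ (tagNet T) Q) :
    t ∈ adjQ (tagNet T) Q := Set.mem_union_right _ h

lemma pure_not {Q : Set (Set (Tag T))} (hp : pureDP (tagNet T) Q) {t : T}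
    (h1 : t ∈ postQ (tagNet T) Q) (h2 : t ∈ preQ (tagNet T) Q) : False :=
  Set.eq_empty_iff_forall_notMem.mp hp t ⟨h1, h2⟩

lemma sep_not {C D : Set (Set (Tag T))} (hs : separated (tagNet T) C D) {t : T}
    (h1 : t ∈ adjQ (tagNet T) C) (h2 : t ∈ adjQ (tagNet T) D) : False :=
  Set.eq_empty_iff_forall_notMem.mp hs t ⟨h1, h2⟩

lemma sep_comm {C D : Set (Set (Tag T))} (hs : separated (tagNet T) C D) :
    separated (tagNet T) D C := by
  rw [separated, Set.inter_comm]; exact hs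

lemma cross_comm (C D : Set (Set (Tag T))) : cross C D = cross D C := by
  ext W
  constructor
  · rintro ⟨Z, hZ, Z', hZ', rfl⟩; exact ⟨Z', hZ', Z, hZ, (Set.union_comm _ _)⟩
  · rintro ⟨Z, hZ, Z', hZ', rfl⟩; exact ⟨Z', hZ', Z, hZ, (Set.union_comm _ _)⟩

lemma preQ_cross {C D : Set (Set (Tag T))} (hC : C.Nonempty) (hD : D.Nonempty) :
    preQ (tagNet T) (cross C D) = preQ (tagNet T) C ∪ preQ (tagNet T) D := by
  ext t
  simp only [Set.mem_union, mem_preQ_tag]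
  constructor
  · rintro ⟨W, ⟨Z, hZ, Z', hZ', rfl⟩, h⟩
    rcases h with h | h
    · exact Or.inl ⟨Z, hZ, h⟩
    · exact Or.inr ⟨Z', hZ', h⟩
  · rintro (⟨Z, hZ, h⟩ | ⟨Z', hZ', h⟩)
    · obtain ⟨Z', hZ'⟩ := hD
      exact ⟨Z ∪ Z', ⟨Z, hZ, Z', hZ', rfl⟩, Set.mem_union_left _ h⟩
    · obtain ⟨Z, hZ⟩ := hC
      exact ⟨Z ∪ Z', ⟨Z, hZ, Z', hZ', rfl⟩, Set.mem_union_right _ h⟩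

lemma postQ_cross {C D : Set (Set (Tag T))} (hC : C.Nonempty) (hD : D.Nonempty) :
    postQ (tagNet T) (cross C D) = postQ (tagNet T) C ∪ postQ (tagNet T) D := by
  ext t
  simp only [Set.mem_union, mem_postQ_tag]
  constructor
  · rintro ⟨W, ⟨Z, hZ, Z', hZ', rfl⟩, h⟩
    rcases h with h | h
    · exact Or.inl ⟨Z, hZ, h⟩
    · exact Or.inr ⟨Z', hZ', h⟩
  · rintro (⟨Z, hZ, h⟩ | ⟨Z', hZ', h⟩)
    · obtain ⟨Z', hZ'⟩ := hD
      exact ⟨Z ∪ Z', ⟨Z, hZ, Z', hZ', rfl⟩, Set.mem_union_left _ h⟩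
    · obtain ⟨Z, hZ⟩ := hC
      exact ⟨Z ∪ Z', ⟨Z, hZ, Z', hZ', rfl⟩, Set.mem_union_right _ h⟩

lemma insQ_eq {Q : Set (Set (Tag T))} (hp : pureDP (tagNet T) Q) :
    insQ (tagNet T) Q = preQ (tagNet T) Q := by
  ext t
  exact ⟨fun h => h.1, fun h => ⟨h, fun h2 => pure_not hp h2 h⟩⟩

lemma remQ_eq {Q : Set (Set (Tag T))} (hp : pureDP (tagNet T) Q) :
    remQ (tagNet T) Q = postQ (tagNet T) Q := by
  ext t
  exact ⟨fun h => h.1, fun h => ⟨h, fun h2 => pure_not hp h h2⟩⟩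

lemma readQ_empty {Q : Set (Set (Tag T))} (hp : pureDP (tagNet T) Q) :
    readQ (tagNet T) Q = ∅ := by
  apply Set.eq_empty_iff_forall_notMem.2
  rintro t ⟨hadj, heq⟩
  rcases hadj with h | h
  · refine pure_not hp ?_ h
    show ((tagNet T).pre t ∩ Q).Nonempty
    rw [heq]; exact h
  · refine pure_not hp h ?_
    show ((tagNet T).post t ∩ Q).Nonempty
    rw [← heq]; exact h

lemma pure_cross {C D : Set (Set (Tag T))} (hNC : C.Nonempty) (hND : D.Nonempty)
    (hpC : pureDP (tagNet T) C) (hpD : pureDP (tagNet T) D)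
    (hsep : separated (tagNet T) C D) : pureDP (tagNet T) (cross C D) := by
  apply Set.eq_empty_iff_forall_notMem.2
  rintro t ⟨hpost, hpre⟩
  rw [postQ_cross hNC hND] at hpost
  rw [preQ_cross hNC hND] at hpre
  rcases hpost with h1 | h1 <;> rcases hpre with h2 | h2
  · exact pure_not hpC h1 h2
  · exact sep_not hsep (adj_of_post h1) (adj_of_pre h2)
  · exact sep_not hsep (adj_of_pre h2) (adj_of_post h1)
  · exact pure_not hpD h1 h2

lemma mem_postList {l : List T} {P : Set (Tag T)} :
    P ∈ postList (tagNet T) l ↔ ∃ t ∈ l, Tag.inp t ∈ P := by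
  simp [postList, mem_post_tag]

lemma mem_epreList {l : List T} {P : Set (Tag T)} :
    P ∈ epreList (tagNet T) l ↔ ∃ t ∈ l, Tag.out t ∈ P ∧ Tag.inp t ∉ P := by
  simp only [epreList, Set.mem_iUnion, Set.mem_diff, mem_pre_tag, mem_post_tag]
  tauto

end Aux

section InSeq
variable {T : Type}

lemma take_get_mem {σ : List T} {i j : ℕ} (hi : i < σ.length) (hij : i < j) :
    σ.get ⟨i, hi⟩ ∈ σ.take j := by
  rw [List.get_eq_getElem]
  have h' : i < (σ.take j).length := by rw [List.length_take]; omega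
  have := List.getElem_mem h'
  rwa [List.getElem_take] at this

lemma inseq_mem_ins {Q : Set (Set (Tag T))} {σ : List T} (hp : pureDP (tagNet T) Q)
    (hσ : isInSeq (tagNet T) Q σ) {t : T} (ht : t ∈ σ) : t ∈ insQ (tagNet T) Q := by
  rcases hσ.2.1 t ht with h | h
  · exact h
  · rw [readQ_empty hp] at h; exact h.elim

lemma outseq_mem_rem {Q : Set (Set (Tag T))} {σ : List T} (hp : pureDP (tagNet T) Q)
    (hσ : isOutSeq (tagNet T) Q σ) {t : T} (ht : t ∈ σ) : t ∈ remQ (tagNet T) Q := by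
  rcases hσ.2.1 t ht with h | h
  · exact h
  · rw [readQ_empty hp] at h; exact h.elim

lemma no_double_fill {Q : Set (Set (Tag T))} {σ : List T} (hp : pureDP (tagNet T) Q)
    (hσ : isInSeq (tagNet T) Q σ) {i j : ℕ} (hi : i < σ.length) (hj : j < σ.length)
    (hij : i < j) {P : Set (Tag T)} (hP : P ∈ Q)
    (h1 : Tag.inp (σ.get ⟨i, hi⟩) ∈ P) (h2 : Tag.inp (σ.get ⟨j, hj⟩) ∈ P) : False := by
  have hcond := (hσ.2.2.2 j hj (Nat.lt_of_le_of_lt (Nat.zero_le i) hij)).2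
  have hins := inseq_mem_ins hp hσ (σ.get_mem ⟨j, hj⟩)
  have hnpre : Tag.out (σ.get ⟨j, hj⟩) ∉ P := fun h => hins.2 ⟨P, h, hP⟩
  exact Set.eq_empty_iff_forall_notMem.mp hcond P
    ⟨⟨hP, h2, hnpre⟩, mem_postList.mpr ⟨σ.get ⟨i, hi⟩, take_get_mem hi hij, h1⟩⟩

lemma no_double_consume {Q : Set (Set (Tag T))} {σ : List T} (hp : pureDP (tagNet T) Q)
    (hσ : isOutSeq (tagNet T) Q σ) {i j : ℕ} (hi : i < σ.length) (hj : j < σ.length)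
    (hij : i < j) {P : Set (Tag T)} (hP : P ∈ Q)
    (h1 : Tag.out (σ.get ⟨i, hi⟩) ∈ P) (h2 : Tag.out (σ.get ⟨j, hj⟩) ∈ P) : False := by
  have hcond := hσ.2.2.2 j hj (Nat.lt_of_le_of_lt (Nat.zero_le i) hij)
  have hrem := outseq_mem_rem hp hσ (σ.get_mem ⟨i, hi⟩)
  have hnpost : Tag.inp (σ.get ⟨i, hi⟩) ∉ P := fun h => hrem.2 ⟨P, h, hP⟩
  exact (hcond ⟨hP, h2⟩).2
    (mem_epreList.mpr ⟨σ.get ⟨i, hi⟩, take_get_mem hi hij, h1, hnpost⟩)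

lemma inseq_dichot {C D : Set (Set (Tag T))} {σ : List T}
    (hpW : pureDP (tagNet T) (cross C D)) (hNC : C.Nonempty) (hND : D.Nonempty)
    (hsep : separated (tagNet T) C D)
    (hσ : isInSeq (tagNet T) (cross C D) σ) :
    (∀ t ∈ σ, t ∈ preQ (tagNet T) C) ∨ (∀ t ∈ σ, t ∈ preQ (tagNet T) D) := by
  have core : ∀ i (hi : i < σ.length), ∀ j (hj : j < σ.length),
      σ.get ⟨i, hi⟩ ∈ preQ (tagNet T) C → σ.get ⟨j, hj⟩ ∈ preQ (tagNet T) D → False := by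
    intro i hi j hj htC hsD
    obtain ⟨Z, hZ, hiZ⟩ := mem_preQ_tag.mp htC
    obtain ⟨Z', hZ', hiZ'⟩ := mem_preQ_tag.mp hsD
    have hW : Z ∪ Z' ∈ cross C D := ⟨Z, hZ, Z', hZ', rfl⟩
    rcases Nat.lt_trichotomy i j with h | h | h
    · exact no_double_fill hpW hσ hi hj h hW (Set.mem_union_left _ hiZ)
        (Set.mem_union_right _ hiZ')
    · subst h
      exact sep_not hsep (adj_of_pre htC) (adj_of_pre hsD)
    · exact no_double_fill hpW hσ hj hi h hW (Set.mem_union_right _ hiZ')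
        (Set.mem_union_left _ hiZ)
  have hmem : ∀ t ∈ σ, t ∈ preQ (tagNet T) C ∪ preQ (tagNet T) D := by
    intro t ht
    have := (inseq_mem_ins hpW hσ ht).1
    rwa [preQ_cross hNC hND] at this
  by_cases hc : ∀ t ∈ σ, t ∈ preQ (tagNet T) C
  · exact Or.inl hc
  · push_neg at hc
    obtain ⟨s, hsmem, hsC⟩ := hc
    have hsD : s ∈ preQ (tagNet T) D := (hmem s hsmem).resolve_left hsC
    obtain ⟨⟨j, hj⟩, rfl⟩ := List.mem_iff_get.mp hsmem
    right
    intro t ht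
    rcases hmem t ht with h | h
    · obtain ⟨⟨i, hi⟩, rfl⟩ := List.mem_iff_get.mp ht
      exact absurd (core i hi j hj h hsD) not_false
    · exact h

lemma outseq_dichot {C D : Set (Set (Tag T))} {σ : List T}
    (hpW : pureDP (tagNet T) (cross C D)) (hNC : C.Nonempty) (hND : D.Nonempty)
    (hsep : separated (tagNet T) C D)
    (hσ : isOutSeq (tagNet T) (cross C D) σ) :
    (∀ t ∈ σ, t ∈ postQ (tagNet T) C) ∨ (∀ t ∈ σ, t ∈ postQ (tagNet T) D) := by
  have core : ∀ i (hi : i < σ.length), ∀ j (hj : j < σ.length),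
      σ.get ⟨i, hi⟩ ∈ postQ (tagNet T) C → σ.get ⟨j, hj⟩ ∈ postQ (tagNet T) D → False := by
    intro i hi j hj htC hsD
    obtain ⟨Z, hZ, hiZ⟩ := mem_postQ_tag.mp htC
    obtain ⟨Z', hZ', hiZ'⟩ := mem_postQ_tag.mp hsD
    have hW : Z ∪ Z' ∈ cross C D := ⟨Z, hZ, Z', hZ', rfl⟩
    rcases Nat.lt_trichotomy i j with h | h | h
    · exact no_double_consume hpW hσ hi hj h hW (Set.mem_union_left _ hiZ)
        (Set.mem_union_right _ hiZ')
    · subst h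
      exact sep_not hsep (adj_of_post htC) (adj_of_post hsD)
    · exact no_double_consume hpW hσ hj hi h hW (Set.mem_union_right _ hiZ')
        (Set.mem_union_left _ hiZ)
  have hmem : ∀ t ∈ σ, t ∈ postQ (tagNet T) C ∪ postQ (tagNet T) D := by
    intro t ht
    have := (outseq_mem_rem hpW hσ ht).1
    rwa [postQ_cross hNC hND] at this
  by_cases hc : ∀ t ∈ σ, t ∈ postQ (tagNet T) C
  · exact Or.inl hc
  · push_neg at hc
    obtain ⟨s, hsmem, hsC⟩ := hc
    have hsD : s ∈ postQ (tagNet T) D := (hmem s hsmem).resolve_left hsC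
    obtain ⟨⟨j, hj⟩, rfl⟩ := List.mem_iff_get.mp hsmem
    right
    intro t ht
    rcases hmem t ht with h | h
    · obtain ⟨⟨i, hi⟩, rfl⟩ := List.mem_iff_get.mp ht
      exact absurd (core i hi j hj h hsD) not_false
    · exact h

end InSeq
section ProjLift
variable {T : Type}

lemma inseq_project {C D : Set (Set (Tag T))} {σ : List T}
    (hND : D.Nonempty) (hpC : pureDP (tagNet T) C)
    (hsep : separated (tagNet T) C D)
    (hσ : isInSeq (tagNet T) (cross C D) σ)
    (hall : ∀ t ∈ σ, t ∈ preQ (tagNet T) C) :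
    isInSeq (tagNet T) C σ := by
  have hins : ∀ t ∈ σ, t ∈ insQ (tagNet T) C :=
    fun t ht => ⟨hall t ht, fun h2 => pure_not hpC h2 (hall t ht)⟩
  refine ⟨hσ.1, fun t ht => Set.mem_union_left _ (hins t ht),
    fun t ht => hins t (List.mem_of_mem_head? ht), ?_⟩
  intro i h hpos
  have htC : σ.get ⟨i, h⟩ ∈ preQ (tagNet T) C := hall _ (σ.get_mem ⟨i, h⟩)
  constructor
  · rintro P ⟨hPC, hPpre⟩
    exact (pure_not hpC ⟨P, hPpre, hPC⟩ htC).elim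
  · apply Set.eq_empty_iff_forall_notMem.2
    rintro Z ⟨⟨hZC, hZpost, hZnpre⟩, hZlist⟩
    obtain ⟨Z', hZ'⟩ := hND
    obtain ⟨s, hs, hinps⟩ := mem_postList.mp hZlist
    have hWcond := (hσ.2.2.2 i h hpos).2
    apply Set.eq_empty_iff_forall_notMem.mp hWcond (Z ∪ Z')
    refine ⟨⟨⟨Z, hZC, Z', hZ', rfl⟩, Set.mem_union_left _ hZpost, ?_⟩, ?_⟩
    · rintro (h1 | h1)
      · exact pure_not hpC ⟨Z, h1, hZC⟩ htC
      · exact sep_not hsep (adj_of_pre htC)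
          (adj_of_post (mem_postQ_tag.mpr ⟨Z', hZ', h1⟩))
    · exact mem_postList.mpr ⟨s, hs, Set.mem_union_left _ hinps⟩

lemma cinseq_lift {C D : Set (Set (Tag T))} {τ : List T}
    (hNC : C.Nonempty) (hND : D.Nonempty) (hpC : pureDP (tagNet T) C)
    (hsep : separated (tagNet T) C D)
    (hτ : isCInSeq (tagNet T) C τ) :
    isCInSeq (tagNet T) (cross C D) τ := by
  have hallC : ∀ t ∈ τ, t ∈ preQ (tagNet T) C := fun t ht => (inseq_mem_ins hpC hτ.1 ht).1
  have hinsW : ∀ t ∈ τ, t ∈ insQ (tagNet T) (cross C D) := by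
    intro t ht
    constructor
    · rw [preQ_cross hNC hND]; exact Set.mem_union_left _ (hallC t ht)
    · rw [postQ_cross hNC hND]
      rintro (h | h)
      · exact pure_not hpC h (hallC t ht)
      · exact sep_not hsep (adj_of_pre (hallC t ht)) (adj_of_post h)
  refine ⟨⟨hτ.1.1, fun t ht => Set.mem_union_left _ (hinsW t ht),
    fun t ht => hinsW t (List.mem_of_mem_head? ht), ?_⟩, ?_⟩
  · intro i h hpos
    have htC := hallC _ (τ.get_mem ⟨i, h⟩)
    constructor
    · rintro P ⟨hPW, hPpre⟩
      exact ((hinsW _ (τ.get_mem ⟨i, h⟩)).2 ⟨P, hPpre, hPW⟩).elim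
    · apply Set.eq_empty_iff_forall_notMem.2
      rintro P ⟨⟨hPW, hPpost, hPnpre⟩, hPlist⟩
      obtain ⟨Z, hZ, Z', hZ', rfl⟩ := hPW
      obtain ⟨s, hstake, hinps⟩ := mem_postList.mp hPlist
      have hsC : s ∈ preQ (tagNet T) C := hallC s (List.mem_of_mem_take hstake)
      have hiZ : Tag.inp (τ.get ⟨i, h⟩) ∈ Z := by
        rcases hPpost with h1 | h1
        · exact h1
        · exact (sep_not hsep (adj_of_pre htC)
            (adj_of_pre (mem_preQ_tag.mpr ⟨Z', hZ', h1⟩))).elim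
      have hsZ : Tag.inp s ∈ Z := by
        rcases hinps with h1 | h1
        · exact h1
        · exact (sep_not hsep (adj_of_pre hsC)
            (adj_of_pre (mem_preQ_tag.mpr ⟨Z', hZ', h1⟩))).elim
      have hCcond := (hτ.1.2.2.2 i h hpos).2
      apply Set.eq_empty_iff_forall_notMem.mp hCcond Z
      refine ⟨⟨hZ, hiZ, ?_⟩, mem_postList.mpr ⟨s, hstake, hsZ⟩⟩
      intro h1
      exact pure_not hpC ⟨Z, h1, hZ⟩ htC
  · rintro P ⟨Z, hZ, Z', hZ', rfl⟩
    obtain ⟨s, hs, hinps⟩ := mem_postList.mp (hτ.2 hZ)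
    exact mem_postList.mpr ⟨s, hs, Set.mem_union_left _ hinps⟩

lemma outseq_project {C D : Set (Set (Tag T))} {σ : List T}
    (hND : D.Nonempty) (hpC : pureDP (tagNet T) C)
    (hsep : separated (tagNet T) C D)
    (hσ : isOutSeq (tagNet T) (cross C D) σ)
    (hall : ∀ t ∈ σ, t ∈ postQ (tagNet T) C) :
    isOutSeq (tagNet T) C σ := by
  have hrem : ∀ t ∈ σ, t ∈ remQ (tagNet T) C :=
    fun t ht => ⟨hall t ht, fun h2 => pure_not hpC (hall t ht) h2⟩
  refine ⟨hσ.1, fun t ht => Set.mem_union_left _ (hrem t ht),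
    fun t ht => hrem t (List.mem_of_mem_head? ht), ?_⟩
  intro i h hpos
  rintro Z ⟨hZC, hZpre⟩
  refine ⟨hZC, ?_⟩
  intro hZep
  obtain ⟨s, hstake, houts, hinps⟩ := mem_epreList.mp hZep
  obtain ⟨Z', hZ'⟩ := hND
  have hWcond := hσ.2.2.2 i h hpos
  have hmem := hWcond (a := Z ∪ Z') ⟨⟨Z, hZC, Z', hZ', rfl⟩, Set.mem_union_left _ hZpre⟩
  apply hmem.2
  refine mem_epreList.mpr ⟨s, hstake, Set.mem_union_left _ houts, ?_⟩
  rintro (h1 | h1)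
  · exact hinps h1
  · exact sep_not hsep (adj_of_post (hall s (List.mem_of_mem_take hstake)))
      (adj_of_pre (mem_preQ_tag.mpr ⟨Z', hZ', h1⟩))

lemma coutseq_lift {C D : Set (Set (Tag T))} {τ : List T}
    (hNC : C.Nonempty) (hND : D.Nonempty) (hpC : pureDP (tagNet T) C)
    (hsep : separated (tagNet T) C D)
    (hτ : isCOutSeq (tagNet T) C τ) :
    isCOutSeq (tagNet T) (cross C D) τ := by
  have hallC : ∀ t ∈ τ, t ∈ postQ (tagNet T) C := fun t ht => (outseq_mem_rem hpC hτ.1 ht).1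
  have hremW : ∀ t ∈ τ, t ∈ remQ (tagNet T) (cross C D) := by
    intro t ht
    constructor
    · rw [postQ_cross hNC hND]; exact Set.mem_union_left _ (hallC t ht)
    · rw [preQ_cross hNC hND]
      rintro (h | h)
      · exact pure_not hpC (hallC t ht) h
      · exact sep_not hsep (adj_of_post (hallC t ht)) (adj_of_pre h)
  refine ⟨⟨hτ.1.1, fun t ht => Set.mem_union_left _ (hremW t ht),
    fun t ht => hremW t (List.mem_of_mem_head? ht), ?_⟩, ?_⟩
  · intro i h hpos
    rintro P ⟨hPW, hPpre⟩
    obtain ⟨Z, hZ, Z', hZ', rfl⟩ := hPW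
    have htC := hallC _ (τ.get_mem ⟨i, h⟩)
    have houtZ : Tag.out (τ.get ⟨i, h⟩) ∈ Z := by
      rcases hPpre with h1 | h1
      · exact h1
      · exact (sep_not hsep (adj_of_post htC)
          (adj_of_post (mem_postQ_tag.mpr ⟨Z', hZ', h1⟩))).elim
    refine ⟨⟨Z, hZ, Z', hZ', rfl⟩, ?_⟩
    intro hep
    obtain ⟨s, hstake, houts, hinps⟩ := mem_epreList.mp hep
    have hsC := hallC s (List.mem_of_mem_take hstake)
    have houtsZ : Tag.out s ∈ Z := by
      rcases houts with h1 | h1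
      · exact h1
      · exact (sep_not hsep (adj_of_post hsC)
          (adj_of_post (mem_postQ_tag.mpr ⟨Z', hZ', h1⟩))).elim
    have hCcond := hτ.1.2.2.2 i h hpos
    exact (hCcond ⟨hZ, houtZ⟩).2
      (mem_epreList.mpr ⟨s, hstake, houtsZ, fun hh => hinps (Set.mem_union_left _ hh)⟩)
  · rintro P ⟨Z, hZ, Z', hZ', rfl⟩
    obtain ⟨s, hs, houts, hinps⟩ := mem_epreList.mp (hτ.2 hZ)
    refine mem_epreList.mpr ⟨s, hs, Set.mem_union_left _ houts, ?_⟩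
    rintro (h1 | h1)
    · exact hinps h1
    · exact sep_not hsep (adj_of_post (hallC s hs))
        (adj_of_pre (mem_preQ_tag.mpr ⟨Z', hZ', h1⟩))

end ProjLift
section Main
variable {T : Type}

lemma in_ext {C D : Set (Set (Tag T))}
    (hC : distPlace (tagNet T) C) (hD : distPlace (tagNet T) D)
    (hpC : pureDP (tagNet T) C) (hpD : pureDP (tagNet T) D)
    (hsep : separated (tagNet T) C D) :
    ∀ σ, isInSeq (tagNet T) (cross C D) σ →
      ∃ τ, σ <+: τ ∧ isCInSeq (tagNet T) (cross C D) τ := by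
  intro σ hσ
  have hNC := hC.1
  have hND := hD.1
  have hpW := pure_cross hNC hND hpC hpD hsep
  rcases inseq_dichot hpW hNC hND hsep hσ with hall | hall
  · obtain ⟨τ, hpre, hcτ⟩ := hC.2.2.2.1 σ (inseq_project hND hpC hsep hσ hall)
    exact ⟨τ, hpre, cinseq_lift hNC hND hpC hsep hcτ⟩
  · rw [cross_comm] at hσ
    obtain ⟨τ, hpre, hcτ⟩ := hD.2.2.2.1 σ (inseq_project hNC hpD (sep_comm hsep) hσ hall)
    refine ⟨τ, hpre, ?_⟩
    rw [cross_comm]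
    exact cinseq_lift hND hNC hpD (sep_comm hsep) hcτ

lemma out_ext {C D : Set (Set (Tag T))}
    (hC : distPlace (tagNet T) C) (hD : distPlace (tagNet T) D)
    (hpC : pureDP (tagNet T) C) (hpD : pureDP (tagNet T) D)
    (hsep : separated (tagNet T) C D) :
    ∀ σ, isOutSeq (tagNet T) (cross C D) σ →
      ∃ τ, σ <+: τ ∧ isCOutSeq (tagNet T) (cross C D) τ := by
  intro σ hσ
  have hNC := hC.1
  have hND := hD.1
  have hpW := pure_cross hNC hND hpC hpD hsep
  rcases outseq_dichot hpW hNC hND hsep hσ with hall | hall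
  · obtain ⟨τ, hpre, hcτ⟩ := hC.2.2.2.2 σ (outseq_project hND hpC hsep hσ hall)
    exact ⟨τ, hpre, coutseq_lift hNC hND hpC hsep hcτ⟩
  · rw [cross_comm] at hσ
    obtain ⟨τ, hpre, hcτ⟩ := hD.2.2.2.2 σ (outseq_project hNC hpD (sep_comm hsep) hσ hall)
    refine ⟨τ, hpre, ?_⟩
    rw [cross_comm]
    exact coutseq_lift hND hNC hpD (sep_comm hsep) hcτ

lemma enables_cross {C D : Set (Set (Tag T))}
    (hC : distPlace (tagNet T) C) (hD : distPlace (tagNet T) D)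
    (hpC : pureDP (tagNet T) C) (hpD : pureDP (tagNet T) D)
    (hsep : separated (tagNet T) C D) :
    ∀ t ∈ insQ (tagNet T) (cross C D), ∀ u ∈ remQ (tagNet T) (cross C D),
      (t, u) ∈ enablesQ (tagNet T) (cross C D) := by
  intro t ht u hu
  have hNC := hC.1
  have hND := hD.1
  have htp : t ∈ preQ (tagNet T) C ∪ preQ (tagNet T) D := by
    rw [← preQ_cross hNC hND]; exact ht.1
  have hup : u ∈ postQ (tagNet T) C ∪ postQ (tagNet T) D := by
    rw [← postQ_cross hNC hND]; exact hu.1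
  rcases htp with ht1 | ht1 <;> rcases hup with hu1 | hu1
  · have hen := hC.2.2.1 t ⟨ht1, fun h => pure_not hpC h ht1⟩
      u ⟨hu1, fun h => pure_not hpC hu1 h⟩
    obtain ⟨P, ⟨⟨hPC, hpost, hnpre⟩, hpreu⟩⟩ := hen
    obtain ⟨Z', hZ'⟩ := hND
    refine ⟨P ∪ Z', ⟨⟨⟨P, hPC, Z', hZ', rfl⟩, Set.mem_union_left _ hpost, ?_⟩,
      Set.mem_union_left _ hpreu⟩⟩
    rintro (h1 | h1)
    · exact hnpre h1
    · exact sep_not hsep (adj_of_pre ht1) (adj_of_post (mem_postQ_tag.mpr ⟨Z', hZ', h1⟩))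
  · obtain ⟨Z, hZ, hiZ⟩ := mem_preQ_tag.mp ht1
    obtain ⟨Z', hZ', hoZ'⟩ := mem_postQ_tag.mp hu1
    refine ⟨Z ∪ Z', ⟨⟨⟨Z, hZ, Z', hZ', rfl⟩, Set.mem_union_left _ hiZ, ?_⟩,
      Set.mem_union_right _ hoZ'⟩⟩
    rintro (h1 | h1)
    · exact pure_not hpC ⟨Z, h1, hZ⟩ ht1
    · exact sep_not hsep (adj_of_pre ht1) (adj_of_post (mem_postQ_tag.mpr ⟨Z', hZ', h1⟩))
  · obtain ⟨Z', hZ', hiZ'⟩ := mem_preQ_tag.mp ht1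
    obtain ⟨Z, hZ, hoZ⟩ := mem_postQ_tag.mp hu1
    refine ⟨Z ∪ Z', ⟨⟨⟨Z, hZ, Z', hZ', rfl⟩, Set.mem_union_right _ hiZ', ?_⟩,
      Set.mem_union_left _ hoZ⟩⟩
    rintro (h1 | h1)
    · exact sep_not hsep (adj_of_post (mem_postQ_tag.mpr ⟨Z, hZ, h1⟩)) (adj_of_pre ht1)
    · exact pure_not hpD ⟨Z', h1, hZ'⟩ ht1
  · have hen := hD.2.2.1 t ⟨ht1, fun h => pure_not hpD h ht1⟩
      u ⟨hu1, fun h => pure_not hpD hu1 h⟩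
    obtain ⟨P, ⟨⟨hPD, hpost, hnpre⟩, hpreu⟩⟩ := hen
    obtain ⟨Z, hZ⟩ := hNC
    refine ⟨Z ∪ P, ⟨⟨⟨Z, hZ, P, hPD, rfl⟩, Set.mem_union_right _ hpost, ?_⟩,
      Set.mem_union_right _ hpreu⟩⟩
    rintro (h1 | h1)
    · exact sep_not hsep (adj_of_post (mem_postQ_tag.mpr ⟨Z, hZ, h1⟩)) (adj_of_pre ht1)
    · exact hnpre h1

lemma distPlace_cross {C D : Set (Set (Tag T))}
    (hC : distPlace (tagNet T) C) (hD : distPlace (tagNet T) D)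
    (hpC : pureDP (tagNet T) C) (hpD : pureDP (tagNet T) D)
    (hsep : separated (tagNet T) C D) :
    distPlace (tagNet T) (cross C D) ∧ pureDP (tagNet T) (cross C D) := by
  have hNC := hC.1
  have hND := hD.1
  have hpW := pure_cross hNC hND hpC hpD hsep
  refine ⟨⟨?_, ?_, enables_cross hC hD hpC hpD hsep, in_ext hC hD hpC hpD hsep,
    out_ext hC hD hpC hpD hsep⟩, hpW⟩
  · obtain ⟨Z, hZ⟩ := hNC
    obtain ⟨Z', hZ'⟩ := hND
    exact ⟨Z ∪ Z', Z, hZ, Z', hZ', rfl⟩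
  · rw [readQ_empty hpW, insQ_eq hpW, remQ_eq hpW, Set.union_empty]
    rfl

end Main
section Graph
variable {T : Type}

lemma clique_left {Γ Γ' : CGraph T} (hdisj : Disjoint Γ.verts Γ'.verts)
    {S : Set (Tag T)} (hS : (cgJoin Γ Γ').graph.IsClique S) :
    Γ.graph.IsClique (S ∩ Γ.verts) := by
  intro x hx y hy hne
  rcases hS hx.1 hy.1 hne with h | h | ⟨_, h | h⟩
  · exact h
  · exact absurd (Γ'.support x y h).1 (fun hh => Set.disjoint_left.mp hdisj hx.2 hh)
  · exact absurd h.2 (fun hh => Set.disjoint_left.mp hdisj hy.2 hh)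
  · exact absurd h.1 (fun hh => Set.disjoint_left.mp hdisj hx.2 hh)

lemma clique_right {Γ Γ' : CGraph T} (hdisj : Disjoint Γ.verts Γ'.verts)
    {S : Set (Tag T)} (hS : (cgJoin Γ Γ').graph.IsClique S) :
    Γ'.graph.IsClique (S ∩ Γ'.verts) := by
  intro x hx y hy hne
  rcases hS hx.1 hy.1 hne with h | h | ⟨_, h | h⟩
  · exact absurd (Γ.support x y h).1 (fun hh => Set.disjoint_right.mp hdisj hx.2 hh)
  · exact h
  · exact absurd h.1 (fun hh => Set.disjoint_right.mp hdisj hx.2 hh)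
  · exact absurd h.2 (fun hh => Set.disjoint_right.mp hdisj hy.2 hh)

lemma clique_join {Γ Γ' : CGraph T} {A B : Set (Tag T)}
    (hA : Γ.graph.IsClique A) (hAv : A ⊆ Γ.verts)
    (hB : Γ'.graph.IsClique B) (hBv : B ⊆ Γ'.verts) :
    (cgJoin Γ Γ').graph.IsClique (A ∪ B) := by
  intro x hx y hy hne
  rcases hx with hx | hx <;> rcases hy with hy | hy
  · exact Or.inl (hA hx hy hne)
  · exact Or.inr (Or.inr ⟨hne, Or.inl ⟨hAv hx, hBv hy⟩⟩)
  · exact Or.inr (Or.inr ⟨hne, Or.inr ⟨hBv hx, hAv hy⟩⟩)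
  · exact Or.inr (Or.inl (hB hx hy hne))

lemma cgPlaces_join {Γ Γ' : CGraph T} (hdisj : Disjoint Γ.verts Γ'.verts)
    (hne1 : (cgPlaces Γ).Nonempty) (hne2 : (cgPlaces Γ').Nonempty) :
    cgPlaces (cgJoin Γ Γ') = cross (cgPlaces Γ) (cgPlaces Γ') := by
  ext K
  constructor
  · rintro ⟨hKne, hKsub, hKcl, hKmax⟩
    have hKsub' : K ⊆ Γ.verts ∪ Γ'.verts := hKsub
    have hKuv : K = (K ∩ Γ.verts) ∪ (K ∩ Γ'.verts) := by
      rw [← Set.inter_union_distrib_left]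
      exact (Set.inter_eq_left.mpr hKsub').symm
    have hAcl := clique_left hdisj hKcl
    have hBcl := clique_right hdisj hKcl
    have hmaxU : ∀ A' B', A' ⊆ Γ.verts → Γ.graph.IsClique A' →
        B' ⊆ Γ'.verts → Γ'.graph.IsClique B' → K ⊆ A' ∪ B' → A' ∪ B' = K :=
      fun A' B' h1 h2 h3 h4 h5 =>
        hKmax _ (Set.union_subset_union h1 h3) (clique_join h2 h1 h4 h3) h5
    have hAne : (K ∩ Γ.verts).Nonempty := by
      by_contra hA
      rw [Set.not_nonempty_iff_eq_empty] at hA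
      obtain ⟨A₀, hA₀⟩ := hne1
      have hKB : K = K ∩ Γ'.verts := by
        rw [hKuv, hA, Set.empty_union, hKuv]
        simp [Set.inter_assoc]
      have heq := hmaxU A₀ (K ∩ Γ'.verts) hA₀.2.1 hA₀.2.2.1 Set.inter_subset_right hBcl
        (by rw [← hKB]; exact fun x hx => Or.inr (hKB ▸ hx))
      have : A₀ ⊆ K ∩ Γ.verts :=
        Set.subset_inter (heq ▸ Set.subset_union_left) hA₀.2.1
      rw [hA] at this
      exact hA₀.1.ne_empty (Set.subset_empty_iff.mp this)
    have hBne : (K ∩ Γ'.verts).Nonempty := by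
      by_contra hB
      rw [Set.not_nonempty_iff_eq_empty] at hB
      obtain ⟨B₀, hB₀⟩ := hne2
      have hKA : K = K ∩ Γ.verts := by
        rw [hKuv, hB, Set.union_empty, hKuv]
        simp [Set.inter_assoc]
      have heq := hmaxU (K ∩ Γ.verts) B₀ Set.inter_subset_right hAcl hB₀.2.1 hB₀.2.2.1
        (by rw [← hKA]; exact fun x hx => Or.inl (hKA ▸ hx))
      have : B₀ ⊆ K ∩ Γ'.verts :=
        Set.subset_inter (heq ▸ Set.subset_union_right) hB₀.2.1
      rw [hB] at this
      exact hB₀.1.ne_empty (Set.subset_empty_iff.mp this)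
    refine ⟨K ∩ Γ.verts, ⟨hAne, Set.inter_subset_right, hAcl, ?_⟩,
      K ∩ Γ'.verts, ⟨hBne, Set.inter_subset_right, hBcl, ?_⟩, hKuv⟩
    · intro E hEv hEcl hAE
      have heq := hmaxU E (K ∩ Γ'.verts) hEv hEcl Set.inter_subset_right hBcl
        (hKuv.subset.trans (Set.union_subset_union hAE (subset_refl _)))
      exact Set.Subset.antisymm
        (Set.subset_inter (heq ▸ Set.subset_union_left) hEv) hAE
    · intro E hEv hEcl hBE
      have heq := hmaxU (K ∩ Γ.verts) E Set.inter_subset_right hAcl hEv hEcl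
        (hKuv.subset.trans (Set.union_subset_union (subset_refl _) hBE))
      exact Set.Subset.antisymm
        (Set.subset_inter (heq ▸ Set.subset_union_right) hEv) hBE
  · rintro ⟨Z, ⟨hZne, hZv, hZcl, hZmax⟩, Z', ⟨hZ'ne, hZ'v, hZ'cl, hZ'max⟩, rfl⟩
    refine ⟨hZne.mono Set.subset_union_left,
      Set.union_subset (fun x hx => Or.inl (hZv hx)) (fun x hx => Or.inr (hZ'v hx)),
      clique_join hZcl hZv hZ'cl hZ'v, ?_⟩
    intro E hEv hEcl hsubE
    have h1 : E ∩ Γ.verts = Z := hZmax _ Set.inter_subset_right (clique_left hdisj hEcl)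
      (Set.subset_inter (Set.subset_union_left.trans hsubE) hZv)
    have h2 : E ∩ Γ'.verts = Z' := hZ'max _ Set.inter_subset_right (clique_right hdisj hEcl)
      (Set.subset_inter (Set.subset_union_right.trans hsubE) hZ'v)
    have hEv' : E ⊆ Γ.verts ∪ Γ'.verts := hEv
    calc E = (E ∩ Γ.verts) ∪ (E ∩ Γ'.verts) := by
            rw [← Set.inter_union_distrib_left]
            exact (Set.inter_eq_left.mpr hEv').symm
      _ = Z ∪ Z' := by rw [h1, h2]

end Graph

/-- if the place sets generated by two vertex-disjoint connection graphs
are separated pure distributed places, then the places generated by their join are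
the cross-product, which is again a pure distributed place. -/
theorem stmt15 (T : Type) (Γ Γ' : CGraph T)
    (hdisj : Disjoint Γ.verts Γ'.verts)
    (hA : distPlace (tagNet T) (cgPlaces Γ))
    (hB : distPlace (tagNet T) (cgPlaces Γ'))
    (hpA : pureDP (tagNet T) (cgPlaces Γ))
    (hpB : pureDP (tagNet T) (cgPlaces Γ'))
    (hsep : separated (tagNet T) (cgPlaces Γ) (cgPlaces Γ')) :
    cgPlaces (cgJoin Γ Γ') = cross (cgPlaces Γ) (cgPlaces Γ') ∧
    distPlace (tagNet T) (cgPlaces (cgJoin Γ Γ')) ∧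
    pureDP (tagNet T) (cgPlaces (cgJoin Γ Γ')) := by
  have heq := cgPlaces_join hdisj hA.1 hB.1
  have hmain := distPlace_cross hA hB hpA hpB hsep
  refine ⟨heq, ?_, ?_⟩ <;> rw [heq]
  · exact hmain.1
  · exact hmain.2
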